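/- If Λ ⊂ 𝔻 is a sampling set for the Nevanlinna class 𝒩 and φ(z) = e^{iθ}(z−a)/(1−āz), with a ∈ 𝔻 and θ ∈ ℝ, is an automorphism of the unit disk, then φ(Λ) is also a sampling set for 𝒩. -/

import Mathlib

open Complex Metric Set MeasureTheory Filter Topology

noncomputable section

/-- The open unit disk in the complex plane. -/
def unitDisk : Set ℂ := Metric.ball 0 1

/-- `log⁺ x = log (max 1 x)`. -/
def logPlus (x : ℝ) : ℝ := Real.log (max 1 x)

/-- `h` is a positive harmonic function on `S`: on a simply connected domain,
harmonic functions are exactly the real parts of holomorphic functions. -/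
def PosHarmOn (S : Set ℂ) (h : ℂ → ℝ) : Prop :=
  (∃ g : ℂ → ℂ, DifferentiableOn ℂ g S ∧ ∀ z ∈ S, h z = (g z).re) ∧
  ∀ z ∈ S, 0 < h z

/-- The Nevanlinna class: holomorphic functions on the unit disk with uniformly
bounded integral means of `log⁺|f|`. -/
def NevClass (f : ℂ → ℂ) : Prop :=
  DifferentiableOn ℂ f unitDisk ∧
  ∃ M : ℝ, ∀ r ∈ Set.Ioo (0:ℝ) 1,
    (1/(2*Real.pi)) * ∫ θ in (0:ℝ)..(2*Real.pi),
      logPlus (‖f ((r:ℂ) * Complex.exp ((θ:ℂ) * Complex.I))‖) ≤ M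

/-- `N(f|Λ)`: infimum of `h(0)` over positive harmonic majorants of `log(1+|f|)` on `Λ`. -/
def NRestrict (f : ℂ → ℂ) (Λ : Set ℂ) : ℝ :=
  sInf {c | ∃ h : ℂ → ℝ, PosHarmOn unitDisk h ∧
    (∀ z ∈ Λ, Real.log (1 + ‖f z‖) ≤ h z) ∧ c = h 0}

/-- `N(f)`. -/
def NFull (f : ℂ → ℂ) : ℝ := NRestrict f unitDisk

/-- `N₊(f|Λ)`. -/
def NplusRestrict (f : ℂ → ℂ) (Λ : Set ℂ) : ℝ :=
  sInf {c | ∃ h : ℂ → ℝ, PosHarmOn unitDisk h ∧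
    (∀ z ∈ Λ, logPlus (‖f z‖) ≤ h z) ∧ c = h 0}

/-- `N₊(f)`. -/
def NplusFull (f : ℂ → ℂ) : ℝ := NplusRestrict f unitDisk

/-- `Λ` is a sampling set for the Nevanlinna class. -/
def SamplingNev (Λ : Set ℂ) : Prop :=
  ∃ C : ℝ, 0 < C ∧ ∀ f : ℂ → ℂ, NevClass f → NFull f ≤ NRestrict f Λ + C

/-- `Λ` is a determination set for the Nevanlinna class. -/
def DeterminationNev (Λ : Set ℂ) : Prop :=
  ∀ f : ℂ → ℂ, NevClass f → (∃ M : ℝ, ∀ z ∈ Λ, ‖f z‖ ≤ M) →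
    ∃ M : ℝ, ∀ z ∈ unitDisk, ‖f z‖ ≤ M

/-- `Λ` is a strongly sampling set for the Nevanlinna class. -/
def StrongSamplingNev (Λ : Set ℂ) : Prop :=
  ∀ f : ℂ → ℂ, ∀ h : ℂ → ℝ, NevClass f → PosHarmOn unitDisk h →
    (∀ z ∈ Λ, logPlus (‖f z‖) ≤ h z) →
    ∀ z ∈ unitDisk, logPlus (‖f z‖) ≤ h z

/-- Pseudohyperbolic distance. -/
def pdist (z w : ℂ) : ℝ :=
  ‖z - w‖ / ‖1 - (starRingEnd ℂ z) * w‖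

/-- Pseudohyperbolic disk. -/
def pBall (z : ℂ) (r : ℝ) : Set ℂ := {w ∈ unitDisk | pdist z w < r}

/-- Pseudohyperbolic dilation `E^δ`. -/
def pDilate (E : Set ℂ) (δ : ℝ) : Set ℂ := ⋃ z ∈ E, pBall z δ

/-- Hayman–Lyons set. -/
def HaymanLyons (E : Set ℂ) : Prop :=
  ∃ δ ∈ Set.Ioo (0:ℝ) 1, ∀ ζ : ℂ, ‖ζ‖ = 1 →
    ∫⁻ z in pDilate E δ, ENNReal.ofReal (1 / ‖ζ - z‖ ^ 2) = ⊤

/-- Dyadic (Whitney) squares `Q_{n,k}`. -/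
def dSquare (n k : ℕ) : Set ℂ :=
  {z | ∃ r θ : ℝ, 1 - (2:ℝ)^(-(n:ℤ)) ≤ r ∧ r < 1 - (2:ℝ)^(-(n:ℤ)-1) ∧
    2*Real.pi*k * (2:ℝ)^(-(n:ℤ)) ≤ θ ∧ θ < 2*Real.pi*(k+1) * (2:ℝ)^(-(n:ℤ)) ∧
    z = (r:ℂ) * Complex.exp ((θ:ℂ) * Complex.I)}

/-- Center of the dyadic square `Q_{n,k}`. -/
def dCenter (n k : ℕ) : ℂ :=
  ((1 - (3/4) * (2:ℝ)^(-(n:ℤ)) : ℝ) : ℂ) *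
    Complex.exp (((2*Real.pi*(k + 1/2) * (2:ℝ)^(-(n:ℤ)) : ℝ) : ℂ) * Complex.I)

/-- `Q̃_{n,k}`: union of the dyadic squares whose closure meets the closure of `Q_{n,k}`. -/
def dTilde (n k : ℕ) : Set ℂ :=
  ⋃ (m : ℕ) (j : ℕ) (_ : j < 2^m)
    (_ : (closure (dSquare m j) ∩ closure (dSquare n k)).Nonempty), dSquare m j

/-- The vulnerability `w_{n,k}(Λ,N)`. -/
def vul (δ : ℝ) (Λ : Set ℂ) (n k N : ℕ) : ℝ :=
  sSup {t | ∃ a : Fin N → ℂ, (∀ j, a j ∈ pDilate (closure (dSquare n k)) δ) ∧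
    t = sInf {s | ∃ lam ∈ Λ ∩ closure (dSquare n k),
      s = ∑ j, Real.log (1 / pdist lam (a j))}}

/-- Poisson kernel `P_z(e^{iθ})`. -/
def poissonKer (z : ℂ) (θ : ℝ) : ℝ :=
  (1 - ‖z‖ ^ 2) / ‖Complex.exp ((θ:ℂ) * Complex.I) - z‖ ^ 2

/-- Poisson integral of a boundary function (in the angle variable). -/
def poissonIntegral (w : ℝ → ℝ) (z : ℂ) : ℝ :=
  (1/(2*Real.pi)) * ∫ θ in (0:ℝ)..(2*Real.pi), poissonKer z θ * w θ

/-- Blaschke factor with zero at `a`. -/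
def blaschkeFactor (a z : ℂ) : ℂ :=
  if a = 0 then z
  else ((starRingEnd ℂ a) / (‖a‖ : ℂ)) * ((a - z) / (1 - (starRingEnd ℂ a) * z))

/-- Blaschke product with zero sequence `Z` (with multiplicities given by repetitions). -/
def blaschkeProd {ι : Type} (Z : ι → ℂ) (z : ℂ) : ℂ := ∏' i, blaschkeFactor (Z i) z

/-- `Z` is a Blaschke sequence in the unit disk. -/
def BlaschkeSeq {ι : Type} (Z : ι → ℂ) : Prop :=
  (∀ i, Z i ∈ unitDisk) ∧ Summable fun i => 1 - ‖Z i‖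

/-- Stolz angle at `ζ` with aperture `κ`. -/
def stolz (κ : ℝ) (ζ : ℂ) : Set ℂ :=
  {z ∈ unitDisk | ‖z - ζ‖ ≤ κ * (1 - ‖z‖)}

/-- `NT(Λ)`: points of the circle that are nontangential limits of points of `Λ`. -/
def NTSet (Λ : Set ℂ) : Set ℂ :=
  {ζ | ∃ κ : ℝ, 1 < κ ∧ ∃ u : ℕ → ℂ,
    (∀ n, u n ∈ Λ ∧ u n ∈ stolz κ ζ) ∧ Tendsto u atTop (𝓝 ζ)}

/-- `f` has nontangential limit `L` at `ζ`. -/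
def NTTendsto (f : ℂ → ℂ) (ζ L : ℂ) : Prop :=
  ∀ κ : ℝ, 1 < κ → Tendsto f (𝓝[stolz κ ζ] ζ) (𝓝 L)

/-- The Smirnov class. -/
def SmirnovClass (f : ℂ → ℂ) : Prop :=
  NevClass f ∧ ∃ fstar : ℝ → ℂ,
    (∀ᵐ (θ : ℝ) ∂(volume.restrict (Set.Ioc (0:ℝ) (2*Real.pi))),
        NTTendsto f (Complex.exp ((θ:ℂ) * Complex.I)) (fstar θ)) ∧
    Tendsto
      (fun r : ℝ => ∫ θ in (0:ℝ)..(2*Real.pi),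
        logPlus (‖f ((r:ℂ) * Complex.exp ((θ:ℂ) * Complex.I))‖))
      (𝓝[<] (1:ℝ))
      (𝓝 (∫ θ in (0:ℝ)..(2*Real.pi), logPlus (‖fstar θ‖)))

/-- `Λ` is a sampling set for the Smirnov class. -/
def SamplingSmirnov (Λ : Set ℂ) : Prop :=
  ∃ C : ℝ, 0 < C ∧ ∀ f : ℂ → ℂ, SmirnovClass f → NFull f ≤ NRestrict f Λ + C

/-- `Λ` is a determination set for the Smirnov class. -/
def DeterminationSmirnov (Λ : Set ℂ) : Prop :=
  ∀ f : ℂ → ℂ, SmirnovClass f → (∃ M : ℝ, ∀ z ∈ Λ, ‖f z‖ ≤ M) →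
    ∃ M : ℝ, ∀ z ∈ unitDisk, ‖f z‖ ≤ M

/-- `Λ` is a strongly sampling set for the Smirnov class. -/
def StrongSamplingSmirnov (Λ : Set ℂ) : Prop :=
  ∀ f : ℂ → ℂ, ∀ h : ℂ → ℝ, SmirnovClass f → PosHarmOn unitDisk h →
    (∀ z ∈ Λ, logPlus (‖f z‖) ≤ h z) →
    ∀ z ∈ unitDisk, logPlus (‖f z‖) ≤ h z

/-- The class `ℱ`. -/
def PsiF (ψ : ℝ → ℝ) : Prop :=
  MonotoneOn ψ (Set.Ico 0 1) ∧ ContinuousOn ψ (Set.Ico 0 1) ∧ ψ 0 = 0 ∧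
  (∀ x ∈ Set.Ico (0:ℝ) 1, 0 ≤ ψ x) ∧
  ∫⁻ x in Set.Ioc (0:ℝ) (1/2), ENNReal.ofReal (ψ x / x ^ 2) ≠ ⊤

/-- Approach region `Γ_ψ(ζ)`. -/
def gammaReg (ψ : ℝ → ℝ) (ζ : ℂ) : Set ℂ :=
  {z ∈ unitDisk | ‖z - ζ‖ < 1 ∧ ψ (‖z - ζ‖) ≤ 1 - ‖z‖}

/-- Condition (b): `∑_{λ∈Λ∩Γ_ψ(ζ)} (1-|λ|) = ∞` for all `ψ ∈ ℱ`, `ζ ∈ 𝕋`. -/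
def BlaschkeSumDiverges (Λ : Set ℂ) : Prop :=
  ∀ ψ : ℝ → ℝ, PsiF ψ → ∀ ζ : ℂ, ‖ζ‖ = 1 →
    ∑' lam : ↥(Λ ∩ gammaReg ψ ζ), ENNReal.ofReal (1 - ‖(lam : ℂ)‖) = ⊤

/-- `g : (0,1] → (0,1]` nondecreasing, continuous, with `g(0⁺)=0`. -/
def GNetFn (g : ℝ → ℝ) : Prop :=
  MonotoneOn g (Set.Ioc 0 1) ∧ ContinuousOn g (Set.Ioc 0 1) ∧
  (∀ t ∈ Set.Ioc (0:ℝ) 1, g t ∈ Set.Ioc (0:ℝ) 1) ∧ Tendsto g (𝓝[>] (0:ℝ)) (𝓝 0)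

/-- `Λ` is a `g`-net. -/
def IsGNet (g : ℝ → ℝ) (Λ : Set ℂ) : Prop :=
  Λ ⊆ unitDisk ∧
  (Λ.Pairwise fun x y =>
    Disjoint (pBall x (g (1 - ‖x‖))) (pBall y (g (1 - ‖y‖)))) ∧
  ∃ C : ℝ, 0 < C ∧ unitDisk = ⋃ lam ∈ Λ, pBall lam (C * g (1 - ‖lam‖))

/-- Uniformly dense sequence (as a set). -/
def UniformlyDense (Λ : Set ℂ) : Prop :=
  Λ ⊆ unitDisk ∧ (∃ s : ℝ, 0 < s ∧ ∀ x ∈ Λ, ∀ y ∈ Λ, x ≠ y → s ≤ pdist x y) ∧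
  ∃ rr : ℝ, rr < 1 ∧ unitDisk = ⋃ lam ∈ Λ, pBall lam rr

/-- `Λ(φ) = ∪_λ D(λ, φ(1-|λ|))`. -/
def unionDisks (Λ : Set ℂ) (φ : ℝ → ℝ) : Set ℂ :=
  ⋃ lam ∈ Λ, pBall lam (φ (1 - ‖lam‖))

/-- The class `𝒮𝒩` of subharmonic functions with bounded means of `u⁺`. -/
def SNClass (u : ℂ → ℝ) : Prop :=
  UpperSemicontinuousOn u unitDisk ∧
  (∀ z ∈ unitDisk, ∀ ρ : ℝ, 0 < ρ → Metric.closedBall z ρ ⊆ unitDisk →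
    u z ≤ (1/(2*Real.pi)) * ∫ θ in (0:ℝ)..(2*Real.pi),
      u (z + (ρ:ℂ) * Complex.exp ((θ:ℂ) * Complex.I))) ∧
  ∃ M : ℝ, ∀ r ∈ Set.Ioo (0:ℝ) 1,
    ∫ θ in (0:ℝ)..(2*Real.pi), max (u ((r:ℂ) * Complex.exp ((θ:ℂ) * Complex.I))) 0 ≤ M

/-- Upper half-plane. -/
def upperHalf : Set ℂ := {z | 0 < z.im}

/-- Cayley transform from the upper half-plane to the unit disk. -/
def cayley (z : ℂ) : ℂ := (z - Complex.I) / (z + Complex.I)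

/-- The discretized rings associated to `{r_n}` and `{ε_n}`. -/
def discRings (r ε : ℕ → ℝ) : Set ℂ :=
  {z | ∃ n j : ℕ, j < Nat.floor (1/((1 - r n) * ε n)) ∧
    z = ((r n : ℝ) : ℂ) * Complex.exp (((2*Real.pi*j*(1 - r n)*ε n : ℝ) : ℂ) * Complex.I)}

/-- A Blaschke distribution. -/
def BlaschkeDistribution (N : ℕ → ℕ → ℕ) : Prop :=
  Summable fun n : ℕ => (2:ℝ)^(-(n:ℤ)) * ∑ k ∈ Finset.range (2^n), (N n k : ℝ)
section AuxSampling

/-! ### Auxiliary lemmas for `sampling_invariant_under_automorphism` -/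

lemma aux_normSq_id (a z : ℂ) :
    Complex.normSq (1 - (starRingEnd ℂ a) * z) - Complex.normSq (z - a)
      = (1 - Complex.normSq a) * (1 - Complex.normSq z) := by
  simp only [Complex.normSq_apply, Complex.sub_re, Complex.sub_im, Complex.mul_re,
    Complex.mul_im, Complex.one_re, Complex.one_im, Complex.conj_re, Complex.conj_im]
  ring

lemma aux_denom_ne_zero {a z : ℂ} (ha : ‖a‖ < 1) (hz : ‖z‖ < 1) :
    (1 - (starRingEnd ℂ a) * z) ≠ 0 := by
  intro h
  have h1 : (starRingEnd ℂ a) * z = 1 := by linear_combination -h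
  have : ‖(starRingEnd ℂ a) * z‖ = 1 := by rw [h1]; simp
  rw [norm_mul, Complex.norm_conj] at this
  nlinarith [norm_nonneg a, norm_nonneg z]

lemma aux_mobius_mem {a z : ℂ} (ha : ‖a‖ < 1) (hz : ‖z‖ < 1) :
    ‖(z - a) / (1 - (starRingEnd ℂ a) * z)‖ < 1 := by
  rw [norm_div, div_lt_one (norm_pos_iff.mpr (aux_denom_ne_zero ha hz))]
  have h1 : Complex.normSq a < 1 := by
    rw [← Complex.sq_norm]; nlinarith [norm_nonneg a]
  have h2 : Complex.normSq z < 1 := by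
    rw [← Complex.sq_norm]; nlinarith [norm_nonneg z]
  have key := aux_normSq_id a z
  have h3 : Complex.normSq (z - a) < Complex.normSq (1 - (starRingEnd ℂ a) * z) := by nlinarith
  have := Real.sqrt_lt_sqrt (Complex.normSq_nonneg _) h3
  rwa [← Complex.norm_def, ← Complex.norm_def] at this

lemma aux_mobius_diffOn {a : ℂ} (ha : ‖a‖ < 1) (θ : ℝ) :
    DifferentiableOn ℂ (fun z => Complex.exp ((θ:ℂ) * Complex.I) *
      ((z - a) / (1 - (starRingEnd ℂ a) * z))) (Metric.ball 0 1) := by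
  apply DifferentiableOn.const_mul
  apply DifferentiableOn.div
  · exact (differentiableOn_id.sub (differentiableOn_const a))
  · exact (differentiableOn_const _).sub ((differentiableOn_const _).mul differentiableOn_id)
  · intro z hz
    exact aux_denom_ne_zero ha (by simpa using mem_ball_zero_iff.1 hz)

lemma aux_mobius_surj {a : ℂ} (ha : ‖a‖ < 1) (θ : ℝ) {z₀ : ℂ}
    (hz₀ : ‖z₀‖ < 1) :
    ∃ w₀ : ℂ, ‖w₀‖ < 1 ∧
      Complex.exp ((θ:ℂ) * Complex.I) * ((w₀ - a) / (1 - (starRingEnd ℂ a) * w₀)) = z₀ := by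
  set u : ℂ := Complex.exp (-((θ:ℂ) * Complex.I)) with hu
  have huabs : ‖u‖ = 1 := by
    rw [hu, show -((θ:ℂ) * Complex.I) = ((-θ : ℝ) : ℂ) * Complex.I by push_cast; ring]
    exact Complex.norm_exp_ofReal_mul_I (-θ)
  have huz : ‖u * z₀‖ < 1 := by rw [norm_mul, huabs, one_mul]; exact hz₀
  have hD' : (1 + (starRingEnd ℂ a) * (u * z₀)) ≠ 0 := by
    have hD : (1 - (starRingEnd ℂ (-a)) * (u * z₀)) ≠ 0 :=
      aux_denom_ne_zero (by simpa using ha) huz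
    intro h; apply hD; rw [map_neg]; linear_combination h
  set w₀ : ℂ := (u * z₀ + a) / (1 + (starRingEnd ℂ a) * (u * z₀)) with hw₀
  have hw₀mem : ‖w₀‖ < 1 := by
    have := aux_mobius_mem (a := -a) (z := u * z₀) (by simpa using ha) huz
    rw [map_neg] at this
    rw [hw₀]
    convert this using 2 <;> ring
  have hden : (1 - (starRingEnd ℂ a) * w₀) ≠ 0 := aux_denom_ne_zero ha hw₀mem
  refine ⟨w₀, hw₀mem, ?_⟩
  have hEu : Complex.exp ((θ:ℂ) * Complex.I) * u = 1 := by
    rw [hu, ← Complex.exp_add]; simp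
  rw [← mul_div_assoc, div_eq_iff hden, hw₀]
  have hW : (u * z₀ + a) / (1 + (starRingEnd ℂ a) * (u * z₀)) * (1 + (starRingEnd ℂ a) * (u * z₀))
      = u * z₀ + a := div_mul_cancel₀ _ hD'
  apply mul_right_cancel₀ hD'
  linear_combination (Complex.exp ((θ:ℂ) * Complex.I) + z₀ * (starRingEnd ℂ a)) * hW
    + (z₀ - a * (starRingEnd ℂ a) * z₀) * hEu

/-- Harnack-type inequality via the Schwarz lemma. -/
lemma aux_harnack {g : ℂ → ℂ} (hd : DifferentiableOn ℂ g (Metric.ball 0 1))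
    (hpos : ∀ z ∈ Metric.ball (0:ℂ) 1, 0 < (g z).re) {w : ℂ} (hw : ‖w‖ < 1) :
    (g w).re ≤ (1 + ‖w‖) / (1 - ‖w‖) * (g 0).re := by
  have h0 : (0:ℂ) ∈ Metric.ball (0:ℂ) 1 := mem_ball_self one_pos
  have hwm : w ∈ Metric.ball (0:ℂ) 1 := mem_ball_zero_iff.2 (by simpa using hw)
  have hden : ∀ z ∈ Metric.ball (0:ℂ) 1, g z + (starRingEnd ℂ) (g 0) ≠ 0 := by
    intro z hz h
    have : (g z + (starRingEnd ℂ) (g 0)).re = 0 := by rw [h]; simp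
    rw [Complex.add_re, Complex.conj_re] at this
    have := hpos z hz; have := hpos 0 h0; linarith
  set q : ℂ → ℂ := fun z => (g z - g 0) / (g z + (starRingEnd ℂ) (g 0)) with hq
  have hqd : DifferentiableOn ℂ q (Metric.ball 0 1) :=
    DifferentiableOn.div (hd.sub (differentiableOn_const _))
      (hd.add (differentiableOn_const _)) hden
  have hqmaps : Set.MapsTo q (Metric.ball 0 1) (Metric.ball 0 1) := by
    intro z hz
    rw [mem_ball_zero_iff, hq]
    simp only
    rw [norm_div, div_lt_one (norm_pos_iff.mpr (hden z hz))]
    have key : Complex.normSq (g z + (starRingEnd ℂ) (g 0)) - Complex.normSq (g z - g 0)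
        = 4 * (g z).re * (g 0).re := by
      simp only [Complex.normSq_apply, Complex.add_re, Complex.add_im, Complex.sub_re,
        Complex.sub_im, Complex.conj_re, Complex.conj_im]
      ring
    have h1 := hpos z hz; have h2 := hpos 0 h0
    have h3 : Complex.normSq (g z - g 0) < Complex.normSq (g z + (starRingEnd ℂ) (g 0)) := by
      nlinarith
    have := Real.sqrt_lt_sqrt (Complex.normSq_nonneg _) h3
    rwa [← Complex.norm_def, ← Complex.norm_def] at this
  have hq0 : q 0 = 0 := by rw [hq]; simp
  have hschwarz : ‖q w‖ ≤ ‖w‖ :=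
    norm_le_norm_of_mapsTo_ball hqd (hqmaps.mono_right ball_subset_closedBall) hq0 (by simpa using hw)
  have hkey : g w - g 0 = q w * (g w + (starRingEnd ℂ) (g 0)) := by
    rw [hq]; field_simp [hden w hwm]
  set X := ‖g w - g 0‖ with hX
  set t := ‖w‖ with ht
  have ht0 : 0 ≤ t := norm_nonneg w
  have ht1 : t < 1 := hw
  have hXb : X ≤ t * (X + 2 * (g 0).re) := by
    have h1 : X = ‖q w‖ * ‖g w + (starRingEnd ℂ) (g 0)‖ := by
      rw [hX, hkey, norm_mul]
    have h2 : ‖g w + (starRingEnd ℂ) (g 0)‖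
        ≤ X + ‖g 0 + (starRingEnd ℂ) (g 0)‖ := by
      calc ‖g w + (starRingEnd ℂ) (g 0)‖
          = ‖(g w - g 0) + (g 0 + (starRingEnd ℂ) (g 0))‖ := by ring_nf
        _ ≤ X + ‖g 0 + (starRingEnd ℂ) (g 0)‖ := by
            rw [hX]; exact norm_add_le _ _
    have h3 : ‖g 0 + (starRingEnd ℂ) (g 0)‖ = 2 * (g 0).re := by
      rw [Complex.add_conj, Complex.norm_real, Real.norm_eq_abs]
      have := hpos 0 h0
      rw [abs_of_pos (by linarith)]
    calc X = ‖q w‖ * ‖g w + (starRingEnd ℂ) (g 0)‖ := h1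
      _ ≤ t * (X + 2 * (g 0).re) := by
          apply mul_le_mul hschwarz (le_trans h2 (by rw [h3])) (norm_nonneg _) ht0
  have hre : (g w).re ≤ (g 0).re + X := by
    have : (g w).re - (g 0).re ≤ X := by
      rw [hX, ← Complex.sub_re]; exact Complex.re_le_norm _
    linarith
  have h1t : 0 < 1 - t := by linarith
  have h2 := hpos 0 h0
  rw [div_mul_eq_mul_div, le_div_iff₀ h1t]
  nlinarith

/-- Mean value property for the real part of a holomorphic function on the disk. -/
lemma aux_mvp {F : ℂ → ℂ} (hd : DifferentiableOn ℂ F (Metric.ball 0 1)) {r : ℝ}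
    (hr0 : 0 < r) (hr1 : r < 1) :
    (∫ θ in (0:ℝ)..(2*Real.pi), (F ((r:ℂ) * Complex.exp ((θ:ℂ) * Complex.I))).re)
      = 2 * Real.pi * (F 0).re := by
  have hsub : Metric.closedBall (0:ℂ) r ⊆ Metric.ball (0:ℂ) 1 := by
    intro z hz
    rw [mem_closedBall_zero_iff] at hz
    rw [mem_ball_zero_iff]
    exact lt_of_le_of_lt hz hr1
  have hdc : DiffContOnCl ℂ F (Metric.ball 0 r) :=
    ⟨hd.mono (Metric.ball_subset_ball hr1.le),
     (hd.continuousOn.mono hsub).mono (by rw [closure_ball (0:ℂ) hr0.ne'])⟩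
  have hCI := hdc.circleIntegral_sub_inv_smul (w := 0) (mem_ball_self hr0)
  rw [circleIntegral] at hCI
  have heq : ∀ θ : ℝ, (deriv (circleMap 0 r) θ) •
      ((circleMap 0 r θ - 0)⁻¹ • F (circleMap 0 r θ)) = Complex.I * F (circleMap 0 r θ) := by
    intro θ
    rw [deriv_circleMap]
    have hne : circleMap 0 r θ ≠ 0 := by
      simpa using circleMap_ne_center (c := (0:ℂ)) hr0.ne' (θ := θ)
    simp only [smul_eq_mul, sub_zero]
    field_simp
  rw [intervalIntegral.integral_congr (fun θ _ => heq θ)] at hCI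
  rw [intervalIntegral.integral_const_mul] at hCI
  have hint : ∫ θ in (0:ℝ)..(2*Real.pi), F (circleMap 0 r θ) = 2 * Real.pi * F 0 := by
    apply mul_left_cancel₀ Complex.I_ne_zero
    rw [hCI, smul_eq_mul]; push_cast; ring
  have hcont : Continuous fun θ : ℝ => F (circleMap 0 r θ) := by
    apply ContinuousOn.comp_continuous (hd.continuousOn) (continuous_circleMap 0 r)
    intro θ
    rw [mem_ball_zero_iff]
    simpa [norm_circleMap_zero, abs_of_pos hr0] using hr1
  have hintg : IntervalIntegrable (fun θ : ℝ => F (circleMap 0 r θ))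
      MeasureTheory.volume 0 (2*Real.pi) := hcont.intervalIntegrable 0 (2*Real.pi)
  have hre := (Complex.reCLM).intervalIntegral_comp_comm hintg
  simp only [Complex.reCLM_apply] at hre
  have hcm : ∀ θ : ℝ, circleMap 0 r θ = (r:ℂ) * Complex.exp ((θ:ℂ) * Complex.I) := by
    intro θ; simp [circleMap]
  calc (∫ θ in (0:ℝ)..(2*Real.pi), (F ((r:ℂ) * Complex.exp ((θ:ℂ) * Complex.I))).re)
      = ∫ θ in (0:ℝ)..(2*Real.pi), (F (circleMap 0 r θ)).re := by
        apply intervalIntegral.integral_congr; intro θ _; simp only; rw [hcm θ]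
    _ = (∫ θ in (0:ℝ)..(2*Real.pi), F (circleMap 0 r θ)).re := hre
    _ = 2 * Real.pi * (F 0).re := by rw [hint]; simp [Complex.mul_re]

lemma aux_logPlus_nonneg (x : ℝ) : 0 ≤ logPlus x :=
  Real.log_nonneg (le_max_left 1 x)

lemma aux_logPlus_le_log_one_add {x : ℝ} (hx : 0 ≤ x) : logPlus x ≤ Real.log (1 + x) := by
  apply Real.log_le_log (lt_of_lt_of_le one_pos (le_max_left 1 x))
  exact max_le (by linarith) (by linarith)

lemma aux_log_one_add_le_logPlus_add {x : ℝ} (hx : 0 ≤ x) :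
    Real.log (1 + x) ≤ logPlus x + Real.log 2 := by
  have h1 : (0:ℝ) < max 1 x := lt_of_lt_of_le one_pos (le_max_left 1 x)
  have h2 : 1 + x ≤ max 1 x * 2 := by
    rcases le_total x 1 with h | h
    · rw [max_eq_left h]; linarith
    · rw [max_eq_right h]; linarith
  calc Real.log (1 + x) ≤ Real.log (max 1 x * 2) := Real.log_le_log (by linarith) h2
    _ = logPlus x + Real.log 2 := by rw [Real.log_mul (ne_of_gt h1) two_ne_zero, logPlus]

lemma aux_logPlus_pow {x : ℝ} (hx : 0 ≤ x) (n : ℕ) : logPlus (x ^ n) ≤ n * logPlus x := by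
  have h2 : max 1 (x ^ n) ≤ (max 1 x) ^ n := by
    rcases le_total x 1 with h | h
    · rw [max_eq_left (pow_le_one₀ hx h)]
      exact one_le_pow₀ (le_max_left 1 x)
    · rw [max_eq_right (one_le_pow₀ h)]
      exact pow_le_pow_left₀ hx (le_max_right 1 x) n
  calc logPlus (x ^ n) ≤ Real.log ((max 1 x) ^ n) :=
        Real.log_le_log (lt_of_lt_of_le one_pos (le_max_left 1 (x^n))) h2
    _ = n * logPlus x := by rw [Real.log_pow, logPlus]

lemma aux_logPlus_mono {x y : ℝ} (h : x ≤ y) : logPlus x ≤ logPlus y :=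
  Real.log_le_log (lt_of_lt_of_le one_pos (le_max_left 1 x)) (max_le_max le_rfl h)

lemma aux_continuous_logPlus : Continuous logPlus := by
  apply Real.continuousOn_log.comp_continuous (continuous_const.max continuous_id)
  intro x
  simp only [Set.mem_compl_iff, Set.mem_singleton_iff]
  exact ne_of_gt (lt_of_lt_of_le one_pos (le_max_left 1 x))

lemma aux_mem_unitDisk {z : ℂ} : z ∈ unitDisk ↔ ‖z‖ < 1 := by
  rw [unitDisk, mem_ball_zero_iff]

end AuxSampling

/-- the image of a Nevanlinna sampling set under a disk
automorphism is again a Nevanlinna sampling set. -/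
theorem sampling_invariant_under_automorphism (Λ : Set ℂ) (hΛ : Λ ⊆ unitDisk)
    (a : ℂ) (ha : a ∈ unitDisk) (θ : ℝ) (hsamp : SamplingNev Λ) :
    SamplingNev ((fun z => Complex.exp ((θ:ℂ) * Complex.I) *
      ((z - a) / (1 - (starRingEnd ℂ a) * z))) '' Λ) := by
  obtain ⟨C, hC, hs⟩ := hsamp
  have haabs : ‖a‖ < 1 := aux_mem_unitDisk.1 ha
  set φ : ℂ → ℂ := fun z => Complex.exp ((θ:ℂ) * Complex.I) *
    ((z - a) / (1 - (starRingEnd ℂ a) * z)) with hφdef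
  have hφmem : ∀ z ∈ unitDisk, φ z ∈ unitDisk := by
    intro z hz
    rw [aux_mem_unitDisk] at hz ⊢
    show ‖Complex.exp ((θ:ℂ) * Complex.I) *
      ((z - a) / (1 - (starRingEnd ℂ a) * z))‖ < 1
    rw [norm_mul, Complex.norm_exp_ofReal_mul_I, one_mul]
    exact aux_mobius_mem haabs hz
  have hφd : DifferentiableOn ℂ φ unitDisk := aux_mobius_diffOn haabs θ
  have h0mem : (0:ℂ) ∈ unitDisk := by rw [aux_mem_unitDisk]; simp
  have hlog2 : (0:ℝ) < Real.log 2 := Real.log_pos (by norm_num)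
  have hbdd : ∀ (F : ℂ → ℂ) (E : Set ℂ), BddBelow {c | ∃ h : ℂ → ℝ, PosHarmOn unitDisk h ∧
      (∀ z ∈ E, Real.log (1 + ‖F z‖) ≤ h z) ∧ c = h 0} := by
    intro F E
    refine ⟨0, ?_⟩
    rintro c ⟨h, ⟨_, hpos⟩, _, rfl⟩
    exact (hpos 0 h0mem).le
  have hnonneg : ∀ (F : ℂ → ℂ) (E : Set ℂ), 0 ≤ NRestrict F E := by
    intro F E
    apply Real.sInf_nonneg
    rintro c ⟨h, ⟨_, hpos⟩, _, rfl⟩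
    exact (hpos 0 h0mem).le
  refine ⟨Real.log 2, hlog2, ?_⟩
  intro f hf
  by_cases hSD : {c | ∃ h : ℂ → ℝ, PosHarmOn unitDisk h ∧
      (∀ z ∈ unitDisk, Real.log (1 + ‖f z‖) ≤ h z) ∧ c = h 0}.Nonempty
  swap
  · have hz : NFull f = 0 := by
      show sInf {c | ∃ h : ℂ → ℝ, PosHarmOn unitDisk h ∧
        (∀ z ∈ unitDisk, Real.log (1 + ‖f z‖) ≤ h z) ∧ c = h 0} = 0
      rw [Set.not_nonempty_iff_eq_empty.1 hSD, Real.sInf_empty]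
    rw [hz]
    have := hnonneg f (φ '' Λ)
    linarith
  obtain ⟨cs, Hs, hHsharm, hHsmaj, hcs⟩ := hSD
  obtain ⟨⟨Gs, hGsd, hGsre⟩, hHspos⟩ := hHsharm
  have hΛ'sub : ∀ z ∈ φ '' Λ, z ∈ unitDisk := by
    rintro z ⟨lam, hlam, rfl⟩
    exact hφmem lam (hΛ hlam)
  have hne' : {c | ∃ h : ℂ → ℝ, PosHarmOn unitDisk h ∧
      (∀ z ∈ φ '' Λ, Real.log (1 + ‖f z‖) ≤ h z) ∧ c = h 0}.Nonempty :=
    ⟨Hs 0, Hs, ⟨⟨Gs, hGsd, hGsre⟩, hHspos⟩, fun z hz => hHsmaj z (hΛ'sub z hz), rfl⟩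
  have hGsφd : DifferentiableOn ℂ (fun z => Gs (φ z)) unitDisk :=
    hGsd.comp hφd (fun z hz => hφmem z hz)
  have key : ∀ c ∈ {c | ∃ h : ℂ → ℝ, PosHarmOn unitDisk h ∧
      (∀ z ∈ φ '' Λ, Real.log (1 + ‖f z‖) ≤ h z) ∧ c = h 0},
      NFull f ≤ c + Real.log 2 := by
    rintro c ⟨h, ⟨⟨Gh, hGhd, hGhre⟩, hhpos⟩, hmaj, rfl⟩
    have pointwise : ∀ z₀ ∈ unitDisk, ‖f z₀‖ ≤ Real.exp (h z₀) := by
      intro z₀ hz₀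
      by_cases hfz : f z₀ = 0
      · rw [hfz, norm_zero]; positivity
      obtain ⟨w₀, hw₀abs, hφw₀⟩ := aux_mobius_surj haabs θ (aux_mem_unitDisk.1 hz₀)
      have hw₀mem : w₀ ∈ unitDisk := aux_mem_unitDisk.2 hw₀abs
      have hφw₀' : φ w₀ = z₀ := hφw₀
      have ht0 : 0 ≤ ‖w₀‖ := norm_nonneg w₀
      set t := ‖w₀‖ with htdef
      have ht1 : t < 1 := hw₀abs
      set κ := (1 - t) / (1 + t) with hκdef
      have hκ : 0 < κ := by apply div_pos <;> linarith
      have hfz' : 0 < ‖f z₀‖ := norm_pos_iff.mpr hfz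
      have key2 : ∀ n : ℕ, κ * (n * (Real.log (‖f z₀‖) - h z₀))
          ≤ Real.log 2 + C := by
        intro n
        set g : ℂ → ℂ := fun z => (f (φ z))^n * Complex.exp (((-(n:ℝ)) : ℂ) * Gh (φ z))
          with hgdef
        have habsg : ∀ z ∈ unitDisk, ‖g z‖
            = ‖f (φ z)‖ ^ n * Real.exp (-(n * h (φ z))) := by
          intro z hz
          rw [hgdef]
          simp only
          rw [norm_mul, norm_pow, Complex.norm_exp]
          have hres : ((-(((n:ℕ):ℝ):ℂ)) * Gh (φ z)).re = -((n:ℝ) * h (φ z)) := by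
            rw [neg_mul, Complex.neg_re, Complex.re_ofReal_mul, ← hGhre (φ z) (hφmem z hz)]
          rw [hres]
        have hexple : ∀ z ∈ unitDisk, Real.exp (-(n * h (φ z))) ≤ 1 := by
          intro z hz
          rw [Real.exp_le_one_iff]
          have := hhpos (φ z) (hφmem z hz)
          have hn : (0:ℝ) ≤ n := Nat.cast_nonneg n
          nlinarith
        have hptw : ∀ z ∈ unitDisk, logPlus (‖g z‖) ≤ n * (Gs (φ z)).re := by
          intro z hz
          have h1 : ‖g z‖ ≤ ‖f (φ z)‖ ^ n := by
            rw [habsg z hz]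
            calc ‖f (φ z)‖ ^ n * Real.exp (-(n * h (φ z)))
                ≤ ‖f (φ z)‖ ^ n * 1 :=
                  mul_le_mul_of_nonneg_left (hexple z hz) (by positivity)
              _ = _ := mul_one _
          calc logPlus (‖g z‖) ≤ logPlus (‖f (φ z)‖ ^ n) :=
                aux_logPlus_mono h1
            _ ≤ n * logPlus (‖f (φ z)‖) :=
                aux_logPlus_pow (norm_nonneg _) n
            _ ≤ n * Real.log (1 + ‖f (φ z)‖) :=
                mul_le_mul_of_nonneg_left
                  (aux_logPlus_le_log_one_add (norm_nonneg _)) (Nat.cast_nonneg n)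
            _ ≤ n * (Gs (φ z)).re := by
                refine mul_le_mul_of_nonneg_left ?_ (Nat.cast_nonneg n)
                rw [← hGsre (φ z) (hφmem z hz)]
                exact hHsmaj (φ z) (hφmem z hz)
        have hgd : DifferentiableOn ℂ g unitDisk := by
          rw [hgdef]
          apply DifferentiableOn.mul
          · exact (hf.1.comp hφd (fun z hz => hφmem z hz)).pow n
          · exact ((hGhd.comp hφd (fun z hz => hφmem z hz)).const_mul _).cexp
        have hgNev : NevClass g := by
          refine ⟨hgd, n * (Gs (φ 0)).re, ?_⟩
          intro r hr
          have hγmem : ∀ ϑ : ℝ, ((r:ℂ) * Complex.exp ((ϑ:ℂ) * Complex.I)) ∈ unitDisk := by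
            intro ϑ
            rw [aux_mem_unitDisk, norm_mul, Complex.norm_real, Real.norm_eq_abs,
              Complex.norm_exp_ofReal_mul_I, mul_one, abs_of_pos hr.1]
            exact hr.2
          have hγcont : Continuous fun ϑ : ℝ => ((r:ℂ) * Complex.exp ((ϑ:ℂ) * Complex.I)) :=
            continuous_const.mul (Complex.continuous_exp.comp
              (Complex.continuous_ofReal.mul continuous_const))
          have hc1 : Continuous fun ϑ : ℝ =>
              logPlus (‖g ((r:ℂ) * Complex.exp ((ϑ:ℂ) * Complex.I))‖) := by
            apply aux_continuous_logPlus.comp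
            apply continuous_norm.comp
            exact hgd.continuousOn.comp_continuous hγcont (fun ϑ => hγmem ϑ)
          have hc2 : Continuous fun ϑ : ℝ =>
              (n : ℝ) * (Gs (φ ((r:ℂ) * Complex.exp ((ϑ:ℂ) * Complex.I)))).re := by
            apply continuous_const.mul
            apply Complex.continuous_re.comp
            exact hGsφd.continuousOn.comp_continuous hγcont (fun ϑ => hγmem ϑ)
          have hi1 : IntervalIntegrable (fun ϑ : ℝ =>
              logPlus (‖g ((r:ℂ) * Complex.exp ((ϑ:ℂ) * Complex.I))‖))
              MeasureTheory.volume 0 (2*Real.pi) := hc1.intervalIntegrable 0 (2*Real.pi)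
          have hi2 : IntervalIntegrable (fun ϑ : ℝ =>
              (n : ℝ) * (Gs (φ ((r:ℂ) * Complex.exp ((ϑ:ℂ) * Complex.I)))).re)
              MeasureTheory.volume 0 (2*Real.pi) := hc2.intervalIntegrable 0 (2*Real.pi)
          have hmono := intervalIntegral.integral_mono_on (by positivity : (0:ℝ) ≤ 2*Real.pi)
            hi1 hi2 (fun ϑ _ => hptw _ (hγmem ϑ))
          have hmv := aux_mvp hGsφd hr.1 hr.2
          rw [intervalIntegral.integral_const_mul, hmv] at hmono
          have hπ : Real.pi ≠ 0 := Real.pi_ne_zero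
          calc (1/(2*Real.pi)) * ∫ ϑ in (0:ℝ)..(2*Real.pi),
              logPlus (‖g ((r:ℂ) * Complex.exp ((ϑ:ℂ) * Complex.I))‖)
              ≤ (1/(2*Real.pi)) * ((n:ℝ) * (2 * Real.pi * (Gs (φ 0)).re)) :=
                mul_le_mul_of_nonneg_left hmono (by positivity)
            _ = n * (Gs (φ 0)).re := by field_simp
        have hgΛ : NRestrict g Λ ≤ Real.log 2 := by
          refine csInf_le (hbdd g Λ) ⟨fun _ => Real.log 2, ⟨⟨fun _ => ((Real.log 2 : ℝ) : ℂ),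
            differentiableOn_const _, fun z _ => (Complex.ofReal_re _).symm⟩,
            fun z _ => hlog2⟩, ?_, rfl⟩
          intro lam hlam
          have hlmem : lam ∈ unitDisk := hΛ hlam
          have hφlam : φ lam ∈ φ '' Λ := ⟨lam, hlam, rfl⟩
          have hble : ‖f (φ lam)‖ ≤ Real.exp (h (φ lam)) := by
            have h1 := hmaj (φ lam) hφlam
            have h2 : (0:ℝ) < 1 + ‖f (φ lam)‖ := by
              have := norm_nonneg (f (φ lam)); linarith
            have h3 : 1 + ‖f (φ lam)‖ ≤ Real.exp (h (φ lam)) := by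
              calc 1 + ‖f (φ lam)‖
                  = Real.exp (Real.log (1 + ‖f (φ lam)‖)) := (Real.exp_log h2).symm
                _ ≤ Real.exp (h (φ lam)) := Real.exp_le_exp.2 h1
            have := norm_nonneg (f (φ lam)); linarith
          have hgle : ‖g lam‖ ≤ 1 := by
            rw [habsg lam hlmem]
            rw [show -((n:ℝ) * h (φ lam)) = (n:ℝ) * (-(h (φ lam))) by ring,
              Real.exp_nat_mul, ← mul_pow]
            apply pow_le_one₀ (by positivity)
            calc ‖f (φ lam)‖ * Real.exp (-(h (φ lam)))
                ≤ Real.exp (h (φ lam)) * Real.exp (-(h (φ lam))) :=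
                  mul_le_mul_of_nonneg_right hble (Real.exp_nonneg _)
              _ = 1 := by rw [← Real.exp_add]; simp
          have habs0 : (0:ℝ) ≤ ‖g lam‖ := norm_nonneg _
          have : (0:ℝ) < 1 + ‖g lam‖ := by linarith
          exact Real.log_le_log this (by linarith)
        have hglow : κ * (n * (Real.log (‖f z₀‖) - h z₀)) ≤ NFull g := by
          show κ * (n * (Real.log (‖f z₀‖) - h z₀))
            ≤ sInf {c | ∃ H : ℂ → ℝ, PosHarmOn unitDisk H ∧
              (∀ z ∈ unitDisk, Real.log (1 + ‖g z‖) ≤ H z) ∧ c = H 0}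
          apply le_csInf
          · refine ⟨n * (Gs (φ 0)).re + Real.log 2,
              fun z => n * (Gs (φ z)).re + Real.log 2,
              ⟨⟨fun z => (n:ℂ) * Gs (φ z) + ((Real.log 2 : ℝ) : ℂ),
                (hGsφd.const_mul _).add_const _, fun z hz => by
                  show (n:ℝ) * (Gs (φ z)).re + Real.log 2
                    = ((n:ℂ) * Gs (φ z) + ((Real.log 2 : ℝ) : ℂ)).re
                  rw [Complex.add_re, Complex.ofReal_re, Complex.mul_re,
                    Complex.natCast_re, Complex.natCast_im]
                  ring⟩, fun z hz => ?_⟩,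
              fun z hz => ?_, rfl⟩
            · show (0:ℝ) < (n:ℝ) * (Gs (φ z)).re + Real.log 2
              have h1 := hHspos (φ z) (hφmem z hz)
              rw [hGsre (φ z) (hφmem z hz)] at h1
              have hn : (0:ℝ) ≤ n := Nat.cast_nonneg n
              nlinarith
            · show Real.log (1 + ‖g z‖) ≤ (n:ℝ) * (Gs (φ z)).re + Real.log 2
              calc Real.log (1 + ‖g z‖)
                  ≤ logPlus (‖g z‖) + Real.log 2 :=
                    aux_log_one_add_le_logPlus_add (norm_nonneg _)
                _ ≤ n * (Gs (φ z)).re + Real.log 2 := by linarith [hptw z hz]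
          · rintro c₂ ⟨H, ⟨⟨GH, hGHd, hGHre⟩, hHpos⟩, hHmaj, rfl⟩
            have hGHpos : ∀ z ∈ Metric.ball (0:ℂ) 1, 0 < (GH z).re := by
              intro z hz
              rw [← hGHre z hz]
              exact hHpos z hz
            have hharn := aux_harnack hGHd hGHpos hw₀abs
            rw [← hGHre w₀ hw₀mem, ← hGHre 0 h0mem, ← htdef] at hharn
            have habsgw : ‖g w₀‖
                = ‖f z₀‖ ^ n * Real.exp (-(n * h z₀)) := by
              rw [habsg w₀ hw₀mem, hφw₀']
            have hgw0 : 0 < ‖g w₀‖ := by rw [habsgw]; positivity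
            have hlogg : Real.log (‖g w₀‖)
                = n * (Real.log (‖f z₀‖) - h z₀) := by
              rw [habsgw, Real.log_mul (by positivity) (Real.exp_ne_zero _),
                Real.log_pow, Real.log_exp]
              ring
            have h2' : Real.log (‖g w₀‖) ≤ H w₀ := by
              calc Real.log (‖g w₀‖) ≤ Real.log (1 + ‖g w₀‖) :=
                    Real.log_le_log hgw0 (by linarith)
                _ ≤ H w₀ := hHmaj w₀ hw₀mem
            have h3' : κ * H w₀ ≤ H 0 := by
              have hmul := mul_le_mul_of_nonneg_left hharn hκ.le
              have hne1 : (1:ℝ) - t ≠ 0 := by linarith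
              have hne2 : (1:ℝ) + t ≠ 0 := by linarith
              have heq : κ * ((1 + t)/(1 - t) * H 0) = H 0 := by
                rw [hκdef]; field_simp
              linarith
            calc κ * (n * (Real.log (‖f z₀‖) - h z₀))
                = κ * Real.log (‖g w₀‖) := by rw [hlogg]
              _ ≤ κ * H w₀ := mul_le_mul_of_nonneg_left h2' hκ.le
              _ ≤ H 0 := h3'
        calc κ * (n * (Real.log (‖f z₀‖) - h z₀)) ≤ NFull g := hglow
          _ ≤ NRestrict g Λ + C := hs g hgNev
          _ ≤ Real.log 2 + C := by linarith
      have hL : Real.log (‖f z₀‖) - h z₀ ≤ 0 := by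
        by_contra hcon
        push_neg at hcon
        obtain ⟨n, hn⟩ := exists_nat_gt
          ((Real.log 2 + C) / (κ * (Real.log (‖f z₀‖) - h z₀)))
        have hκL : 0 < κ * (Real.log (‖f z₀‖) - h z₀) := mul_pos hκ hcon
        have h1 := (div_lt_iff₀ hκL).1 hn
        have h2 := key2 n
        nlinarith
      calc ‖f z₀‖ = Real.exp (Real.log (‖f z₀‖)) :=
            (Real.exp_log hfz').symm
        _ ≤ Real.exp (h z₀) := Real.exp_le_exp.2 (by linarith)
    have hglobal : ∀ z ∈ unitDisk, Real.log (1 + ‖f z‖) ≤ h z + Real.log 2 := by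
      intro z hz
      have h1 := pointwise z hz
      have h2 : (0:ℝ) < 1 + ‖f z‖ := by
        have := norm_nonneg (f z); linarith
      rw [Real.log_le_iff_le_exp h2, Real.exp_add, Real.exp_log two_pos]
      have h3 : (1:ℝ) ≤ Real.exp (h z) := by
        calc (1:ℝ) = Real.exp 0 := Real.exp_zero.symm
          _ ≤ Real.exp (h z) := Real.exp_le_exp.2 (hhpos z hz).le
      nlinarith
    have hmem : (h 0 + Real.log 2) ∈ {c | ∃ h' : ℂ → ℝ, PosHarmOn unitDisk h' ∧
        (∀ z ∈ unitDisk, Real.log (1 + ‖f z‖) ≤ h' z) ∧ c = h' 0} :=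
      ⟨fun z => h z + Real.log 2, ⟨⟨fun z => Gh z + ((Real.log 2 : ℝ) : ℂ),
        hGhd.add_const _, fun z hz => by
          show h z + Real.log 2 = (Gh z + ((Real.log 2 : ℝ) : ℂ)).re
          rw [Complex.add_re, ← hGhre z hz, Complex.ofReal_re]⟩,
        fun z hz => by
          show (0:ℝ) < h z + Real.log 2
          have := hhpos z hz; linarith⟩, hglobal, rfl⟩
    exact csInf_le (hbdd f unitDisk) hmem
  have hfinal : NFull f - Real.log 2 ≤ NRestrict f (φ '' Λ) :=
    le_csInf hne' (fun c hc => by linarith [key c hc])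
  linarith
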